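/- The Moyal product on Schwartz functions defined by (f ⋆ g)(x) = (π^D |det θ|)^{-1} ∫∫ e^{-2i y·θ⁻¹z} f(x+y) g(x+z) dy dz, for θ a real invertible antisymmetric D×D matrix, satisfies ∫ (f ⋆ g)(x) dx = ∫ f(x) g(x) dx for all Schwartz functions f, g. -/

import Mathlib

/-!
On Euclidean space the phase is `⟪A y, z⟫` with `A = (θ⁻¹)ᵀ`, which is again antisymmetric.
For fixed `x`, the `z`-integral is a translated Fourier transform of `g`; this turns the inner
double integral into an integral over `y` that is absolutely convergent jointly in `(x, y)`.
Integrating in `x` first then gives the Fourier transform of `f` at the opposite point (the phase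
`⟪A y, y⟫` vanishes), and after the substitution `ξ = π⁻¹ A y` what is left is Parseval's identity
`∫ 𝓕g(ξ) 𝓕f(-ξ) dξ = ∫ f g`, with Jacobian `π^D |det θ|`.
-/

open Matrix MeasureTheory Complex Real FourierTransform
open scoped RealInnerProductSpace

section LinearChangeOfVariables

variable {E F : Type*} [NormedAddCommGroup E] [NormedSpace ℝ E] [MeasurableSpace E]
  [BorelSpace E] [FiniteDimensional ℝ E] {μ : Measure E} [μ.IsAddHaarMeasure]
  [NormedAddCommGroup F] {T : E →ₗ[ℝ] E}

theorem LinearMap.measurableEmbedding_of_det_ne_zero (hT : LinearMap.det T ≠ 0) :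
    MeasurableEmbedding T :=
  (T.equivOfDetNeZero hT).toContinuousLinearEquiv.toHomeomorph.measurableEmbedding

theorem MeasureTheory.Measure.integral_comp_linearMap [NormedSpace ℝ F]
    (hT : LinearMap.det T ≠ 0) (φ : E → F) :
    ∫ x, φ (T x) ∂μ = |LinearMap.det T|⁻¹ • ∫ x, φ x ∂μ := by
  rw [← (T.measurableEmbedding_of_det_ne_zero hT).integral_map,
    Measure.map_linearMap_addHaar_eq_smul_addHaar μ hT, integral_smul_measure,
    ENNReal.toReal_ofReal (abs_nonneg _), abs_inv]

theorem MeasureTheory.Integrable.comp_linearMap (hT : LinearMap.det T ≠ 0) {φ : E → F}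
    (hφ : Integrable φ μ) : Integrable (φ ∘ T) μ := by
  rw [← (T.measurableEmbedding_of_det_ne_zero hT).integrable_map_iff,
    Measure.map_linearMap_addHaar_eq_smul_addHaar μ hT]
  exact hφ.smul_measure ENNReal.ofReal_ne_top

end LinearChangeOfVariables

theorem MeasureTheory.Integrable.mul_comp_add_prod {G L : Type*} [AddCommGroup G]
    [MeasurableSpace G] [MeasurableAdd₂ G] {μ : Measure G} [SFinite μ] [μ.IsAddLeftInvariant]
    [NormedRing L] {h φ : G → L} (hh : Integrable h μ) (hφ : Integrable φ μ) :
    Integrable (fun p : G × G ↦ h p.2 * φ (p.1 + p.2)) (μ.prod μ) := by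
  have := ((measurePreserving_prod_add μ μ).integrable_comp
    (hh.mul_prod hφ).aestronglyMeasurable).mpr (hh.mul_prod hφ)
  simpa [Function.comp_def, add_comm] using this.swap

variable {V : Type*} [NormedAddCommGroup V] [InnerProductSpace ℝ V] [FiniteDimensional ℝ V]
  [MeasurableSpace V] [BorelSpace V]

theorem integral_exp_inner_mul_comp_add (g : V → ℂ) (a x : V) :
    ∫ z, cexp (-2 * I * ⟪a, z⟫) * g (x + z) = cexp (2 * I * ⟪a, x⟫) * 𝓕 g (π⁻¹ • a) := by
  calc ∫ z, cexp (-2 * I * ⟪a, z⟫) * g (x + z)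
      = ∫ t, cexp (-2 * I * ⟪a, t - x⟫) * g t := by
        rw [← integral_add_left_eq_self (fun t ↦ cexp (-2 * I * ⟪a, t - x⟫) * g t) x]
        simp only [add_sub_cancel_left]
    _ = _ := by
        rw [fourier_eq', ← integral_const_mul]
        refine integral_congr_ae (.of_forall fun t ↦ ?_)
        simp only [smul_eq_mul, ← mul_assoc, ← Complex.exp_add, inner_sub_right,
          real_inner_smul_right, real_inner_comm a]
        congr 2
        push_cast
        field_simp
        ring

theorem SchwartzMap.integral_fourier_mul_fourier_neg (f g : SchwartzMap V ℂ) :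
    ∫ ξ, 𝓕 ⇑g ξ * 𝓕 ⇑f (-ξ) = ∫ x, f x * g x := by
  simp_rw [← fourierInv_eq_fourier_neg, mul_comm (𝓕 ⇑g _)]
  have := SchwartzMap.integral_fourierInv_mul_eq f (𝓕 g)
  simpa [SchwartzMap.fourierInv_coe, SchwartzMap.fourier_coe] using this

/-- With `A` the operator of `(θ⁻¹)ᵀ`, this is `π^D |det θ|` times the Moyal product `f ⋆ g`. -/
noncomputable def moyalIntegral (A : V →ₗ[ℝ] V) (f g : V → ℂ) (x : V) : ℂ :=
  ∫ y, ∫ z, cexp (-2 * I * ⟪A y, z⟫) * f (x + y) * g (x + z)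

theorem moyalIntegral_eq_integral_fourier (A : V →ₗ[ℝ] V) (f g : V → ℂ) (x : V) :
    moyalIntegral A f g x
      = ∫ y, cexp (2 * I * ⟪A y, x⟫) * (𝓕 g (π⁻¹ • A y) * f (x + y)) := by
  refine integral_congr_ae (.of_forall fun y ↦ ?_)
  simp only [mul_right_comm _ (f (x + y)), integral_mul_const, integral_exp_inner_mul_comp_add]
  ring

theorem integral_exp_inner_mul_comp_add_of_inner_eq_zero (g : V → ℂ) {a y : V}
    (h : ⟪a, y⟫ = 0) :
    ∫ x, cexp (2 * I * ⟪a, x⟫) * g (x + y) = 𝓕 g (-(π⁻¹ • a)) := by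
  simpa only [inner_neg_left, h, neg_zero, ofReal_zero, mul_zero, Complex.exp_zero, one_mul,
    smul_neg, ofReal_neg, mul_neg, neg_mul, neg_neg, add_comm y]
    using integral_exp_inner_mul_comp_add g (-a) y

theorem integral_moyalIntegral {A : V →ₗ[ℝ] V} (hA : LinearMap.det A ≠ 0)
    (hskew : ∀ y, ⟪A y, y⟫ = 0) (f g : SchwartzMap V ℂ) :
    ∫ x, moyalIntegral A f g x
      = (π ^ Module.finrank ℝ V * |LinearMap.det A|⁻¹) • ∫ x, f x * g x := by
  have hFg : Integrable (fun y ↦ 𝓕 ⇑g (π⁻¹ • A y)) :=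
    ((𝓕 g).integrable.comp_smul (inv_ne_zero pi_ne_zero)).comp_linearMap hA
  have hint : Integrable (fun p : V × V ↦
      cexp (2 * I * ⟪A p.2, p.1⟫) * (𝓕 ⇑g (π⁻¹ • A p.2) * f (p.1 + p.2))) (volume.prod volume) :=
    (hFg.mul_comp_add_prod f.integrable).bdd_mul (c := 1)
      (Continuous.aestronglyMeasurable (by fun_prop))
      (.of_forall fun p ↦ by simp [Complex.norm_exp])
  calc ∫ x, moyalIntegral A f g x
      = ∫ x, ∫ y, cexp (2 * I * ⟪A y, x⟫) * (𝓕 ⇑g (π⁻¹ • A y) * f (x + y)) := by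
        simp_rw [moyalIntegral_eq_integral_fourier]
    _ = ∫ y, ∫ x, cexp (2 * I * ⟪A y, x⟫) * (𝓕 ⇑g (π⁻¹ • A y) * f (x + y)) :=
        integral_integral_swap hint
    _ = ∫ y, 𝓕 ⇑g (π⁻¹ • A y) * 𝓕 ⇑f (-(π⁻¹ • A y)) := by
        simp_rw [mul_left_comm _ (𝓕 ⇑g _), integral_const_mul,
          integral_exp_inner_mul_comp_add_of_inner_eq_zero _ (hskew _)]
    _ = (π ^ Module.finrank ℝ V * |LinearMap.det A|⁻¹) • ∫ ξ, 𝓕 ⇑g ξ * 𝓕 ⇑f (-ξ) := by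
        rw [Measure.integral_comp_linearMap hA (fun w ↦ 𝓕 ⇑g (π⁻¹ • w) * 𝓕 ⇑f (-(π⁻¹ • w))),
          Measure.integral_comp_inv_smul_of_nonneg _ (fun ξ ↦ 𝓕 ⇑g ξ * 𝓕 ⇑f (-ξ)) pi_pos.le,
          smul_smul, mul_comm]
    _ = _ := by rw [SchwartzMap.integral_fourier_mul_fourier_neg]

theorem Matrix.transpose_nonsing_inv_of_transpose_eq_neg {ι R : Type*} [Fintype ι]
    [DecidableEq ι] [CommRing R] {M : Matrix ι ι R} (hM : IsUnit M) (hanti : Mᵀ = -M) :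
    M⁻¹ᵀ = -M⁻¹ := by
  rw [transpose_nonsing_inv, hanti]
  exact inv_eq_right_inv (by rw [neg_mul_neg, mul_nonsing_inv _ ((isUnit_iff_isUnit_det M).mp hM)])

theorem Matrix.dotProduct_mulVec_self_of_transpose_eq_neg {ι R : Type*} [Fintype ι] [CommRing R]
    [IsAddTorsionFree R] {M : Matrix ι ι R} (hanti : Mᵀ = -M) (v : ι → R) :
    v ⬝ᵥ (M *ᵥ v) = 0 :=
  self_eq_neg.mp <| calc
    v ⬝ᵥ (M *ᵥ v) = (Mᵀ *ᵥ v) ⬝ᵥ v := by rw [dotProduct_mulVec, mulVec_transpose]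
    _ = -(v ⬝ᵥ (M *ᵥ v)) := by rw [hanti, neg_mulVec, neg_dotProduct, dotProduct_comm]

theorem EuclideanSpace.inner_toLpLin_transpose_toLp {ι : Type*} [Fintype ι] [DecidableEq ι]
    (M : Matrix ι ι ℝ) (y z : ι → ℝ) :
    ⟪toLpLin 2 2 Mᵀ (WithLp.toLp 2 y), WithLp.toLp 2 z⟫ = y ⬝ᵥ (M *ᵥ z) := by
  rw [EuclideanSpace.inner_toLp_toLp]
  simp [toLpLin_apply, dotProduct_mulVec, vecMul_transpose, dotProduct_comm]

theorem EuclideanSpace.integral_comp_toLp {ι E : Type*} [Fintype ι] [NormedAddCommGroup E]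
    [NormedSpace ℝ E] (Φ : EuclideanSpace ℝ ι → E) :
    ∫ x : ι → ℝ, Φ (WithLp.toLp 2 x) = ∫ v, Φ v :=
  (PiLp.volume_preserving_toLp ι).integral_comp (MeasurableEquiv.toLp 2 _).measurableEmbedding Φ

theorem moyalIntegral_toLpLin_transpose {ι : Type*} [Fintype ι] [DecidableEq ι]
    (M : Matrix ι ι ℝ) (f g : (ι → ℝ) → ℂ) (x : ι → ℝ) :
    moyalIntegral (toLpLin 2 2 Mᵀ) (f ∘ WithLp.ofLp) (g ∘ WithLp.ofLp) (WithLp.toLp 2 x)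
      = ∫ y, ∫ z, cexp (-2 * I * (y ⬝ᵥ (M *ᵥ z) : ℝ)) * f (x + y) * g (x + z) := by
  simp only [moyalIntegral, ← EuclideanSpace.integral_comp_toLp,
    EuclideanSpace.inner_toLpLin_transpose_toLp]
  rfl

theorem moyal_tracial_general (D : ℕ)
    (θ : Matrix (Fin D) (Fin D) ℝ) (hinv : IsUnit θ) (hanti : θᵀ = -θ)
    (f g : SchwartzMap (Fin D → ℝ) ℂ) :
    (∫ x : Fin D → ℝ, (((Real.pi ^ D * |θ.det|)⁻¹ : ℝ) : ℂ) *
        ∫ y : Fin D → ℝ, ∫ z : Fin D → ℝ,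
          Complex.exp (-2 * Complex.I * ((y ⬝ᵥ (θ⁻¹ *ᵥ z) : ℝ) : ℂ)) *
            f (x + y) * g (x + z))
      = ∫ x : Fin D → ℝ, f x * g x := by
  let A := toLpLin 2 2 θ⁻¹ᵀ
  have hdetθ : θ.det ≠ 0 := ((isUnit_iff_isUnit_det θ).mp hinv).ne_zero
  have hdetA : LinearMap.det A = θ.det⁻¹ := by simp [A]
  have hskew (v : EuclideanSpace ℝ (Fin D)) : ⟪A v, v⟫ = 0 := by
    rw [EuclideanSpace.inner_toLpLin_transpose_toLp θ⁻¹ v.ofLp v.ofLp]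
    exact dotProduct_mulVec_self_of_transpose_eq_neg
      (transpose_nonsing_inv_of_transpose_eq_neg hinv hanti) _
  have htrace : ∫ v, moyalIntegral A (f ∘ WithLp.ofLp) (g ∘ WithLp.ofLp) v
      = (π ^ D * |θ.det|) • ∫ v : EuclideanSpace ℝ (Fin D), f v.ofLp * g v.ofLp := by
    have := integral_moyalIntegral (by simpa [hdetA] using hdetθ) hskew
      (SchwartzMap.compCLMOfContinuousLinearEquiv ℂ (EuclideanSpace.equiv (Fin D) ℝ) f)
      (SchwartzMap.compCLMOfContinuousLinearEquiv ℂ (EuclideanSpace.equiv (Fin D) ℝ) g)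
    rwa [hdetA, finrank_euclideanSpace_fin, abs_inv, inv_inv] at this
  calc _ = (((π ^ D * |θ.det|)⁻¹ : ℝ) : ℂ) *
          ∫ v, moyalIntegral A (f ∘ WithLp.ofLp) (g ∘ WithLp.ofLp) v := by
        simp only [← moyalIntegral_toLpLin_transpose, integral_const_mul, A,
          EuclideanSpace.integral_comp_toLp (moyalIntegral _ _ _)]
    _ = ∫ x, f x * g x := by
        rw [htrace, Complex.real_smul, ← mul_assoc, ← Complex.ofReal_mul,
          inv_mul_cancel₀ (mul_ne_zero (by positivity) (abs_ne_zero.mpr hdetθ)),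
          Complex.ofReal_one, one_mul,
          EuclideanSpace.integral_comp_toLp (fun v ↦ f v.ofLp * g v.ofLp)]

/-- **Tracial property of the Moyal product.**  For `θ` a real invertible antisymmetric
`D × D` matrix (`D` even) and Schwartz functions `f, g`, the Moyal product
`(f ⋆ g)(x) = (π^D |det θ|)⁻¹ ∫∫ e^{-2i y·θ⁻¹z} f(x+y) g(x+z) dy dz` satisfies
`∫ f ⋆ g = ∫ f g`. -/
theorem moyal_tracial (D : ℕ) (hD : Even D)
    (θ : Matrix (Fin D) (Fin D) ℝ) (hinv : IsUnit θ) (hanti : θᵀ = -θ)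
    (f g : SchwartzMap (Fin D → ℝ) ℂ) :
    (∫ x : Fin D → ℝ, (((Real.pi ^ D * |θ.det|)⁻¹ : ℝ) : ℂ) *
        ∫ y : Fin D → ℝ, ∫ z : Fin D → ℝ,
          Complex.exp (-2 * Complex.I * ((y ⬝ᵥ (θ⁻¹ *ᵥ z) : ℝ) : ℂ)) *
            f (x + y) * g (x + z))
      = ∫ x : Fin D → ℝ, f x * g x :=
  moyal_tracial_general D θ hinv hanti f g
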